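/- Let X be a reflexive Banach space and K ⊆ X a nonempty weakly compact convex set. If A : K → X* is monotone (⟨A(x) − A(y), x − y⟩ ≥ 0 for all x, y ∈ K) and continuous on finite-dimensional subspaces, then there exists x ∈ K with ⟨A(x), y − x⟩ ≥ 0 for all y ∈ K. -/

import Mathlib

/-!
Minty's argument. For finitely many points `yᵢ ∈ K`, monotonicity makes the quadratic form of
the matrix `Mᵢⱼ = ⟨A yᵢ, yᵢ - yⱼ⟩` nonnegative on the standard simplex, and separating the image
of the simplex from the nonnegative orthant yields weights `λ` in the simplex with `M λ ≥ 0`; the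
point `x = ∑ λⱼ yⱼ ∈ K` then satisfies `⟨A yᵢ, yᵢ - x⟩ ≥ 0` for all `i`. By weak compactness of `K`
and the finite intersection property of the weakly closed sets `{x | ⟨A y, y - x⟩ ≥ 0}`, some
`x ∈ K` satisfies `⟨A y, y - x⟩ ≥ 0` for every `y ∈ K`. Testing this at `x + t (y - x)` and letting
`t → 0⁺` inside the plane spanned by `x` and `y`, where `A` is continuous, gives `⟨A x, y - x⟩ ≥ 0`.
-/

open Filter Topology NormedSpace

/-- Weak convergence of a sequence: tested against all continuous linear functionals. -/
def WeakConv {X : Type*} [NormedAddCommGroup X] [NormedSpace ℝ X] (u : ℕ → X) (x : X) : Prop :=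
  ∀ φ : X →L[ℝ] ℝ, Filter.Tendsto (fun n => φ (u n)) Filter.atTop (nhds (φ x))

/-- A set is weakly compact: its copy in the weak space is compact. -/
def WeaklyCompact {X : Type*} [NormedAddCommGroup X] [NormedSpace ℝ X] (S : Set X) : Prop :=
  IsCompact (_root_.toWeakSpaceCLM ℝ X '' S)

open Matrix

theorem exists_nonneg_forall_dotProduct_neg_of_disjoint_Ici {ι : Type*} [Fintype ι]
    {C : Set (ι → ℝ)} (hC : IsCompact C) (hCconv : Convex ℝ C) (hdisj : Disjoint C (Set.Ici 0)) :
    ∃ p : ι → ℝ, 0 ≤ p ∧ ∀ c ∈ C, c ⬝ᵥ p < 0 := by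
  classical
  obtain ⟨f, u, v, hfu, huv, hfv⟩ :=
    geometric_hahn_banach_compact_closed hCconv hC (convex_Ici 0) isClosed_Ici hdisj
  have hv : v < 0 := by simpa using hfv 0 Set.self_mem_Ici
  -- `f` is bounded below on the cone `Ici 0`, hence nonnegative there.
  have hf_nonneg : ∀ q : ι → ℝ, 0 ≤ q → 0 ≤ f q := by
    intro q hq
    by_contra! hfq
    have hpos : 0 < (v - 1) / f q := div_pos_of_neg_of_neg (by linarith) hfq
    have := hfv _ (smul_nonneg hpos.le hq)
    rw [map_smul, smul_eq_mul, div_mul_cancel₀ _ hfq.ne] at this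
    linarith
  have hf : ∀ q, f q = q ⬝ᵥ fun i => f (Pi.single i 1) := by
    intro q
    rw [← ContinuousLinearMap.coe_coe, LinearMap.pi_apply_eq_sum_univ]
    refine Finset.sum_congr rfl fun i _ => ?_
    simp only [smul_eq_mul, eq_comm (a := i), ← Pi.single_apply]
  refine ⟨fun i => f (Pi.single i 1), fun i => hf_nonneg _ (Pi.single_nonneg.2 zero_le_one),
    fun c hc => ?_⟩
  rw [← hf]
  exact (hfu c hc).trans (huv.trans hv)

theorem exists_mem_stdSimplex_mulVec_nonneg {ι : Type*} [Fintype ι] [Nonempty ι]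
    (M : Matrix ι ι ℝ) (h : ∀ l ∈ stdSimplex ℝ ι, 0 ≤ l ⬝ᵥ M *ᵥ l) :
    ∃ l ∈ stdSimplex ℝ ι, 0 ≤ M *ᵥ l := by
  classical
  by_contra! hc
  obtain ⟨p, hp, hpC⟩ := exists_nonneg_forall_dotProduct_neg_of_disjoint_Ici
    ((isCompact_stdSimplex ℝ ι).image M.mulVecLin.continuous_of_finiteDimensional)
    ((convex_stdSimplex ℝ ι).linear_image _)
    (Set.disjoint_left.2 fun _ ⟨l, hl, hMl⟩ => hMl ▸ hc l hl)
  have hsum : 0 < ∑ i, p i := by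
    obtain ⟨i⟩ := ‹Nonempty ι›
    refine (Finset.sum_nonneg fun i _ => hp i).lt_of_ne fun h0 => ?_
    have hp0 : p = 0 := funext fun j =>
      (Finset.sum_eq_zero_iff_of_nonneg fun i _ => hp i).1 h0.symm j (Finset.mem_univ j)
    simpa [hp0] using hpC _ ⟨_, single_mem_stdSimplex ℝ i, rfl⟩
  set l := (∑ i, p i)⁻¹ • p with hl_def
  have hl : l ∈ stdSimplex ℝ ι :=
    ⟨fun i => mul_nonneg (inv_nonneg.2 hsum.le) (hp i), by
      simp only [l, Pi.smul_apply, smul_eq_mul, ← Finset.mul_sum, inv_mul_cancel₀ hsum.ne']⟩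
  have hpl : (M *ᵥ l) ⬝ᵥ p = (∑ i, p i) * (l ⬝ᵥ M *ᵥ l) := by
    rw [dotProduct_comm, hl_def, smul_dotProduct, smul_eq_mul, mul_inv_cancel_left₀ hsum.ne']
  have := hpC _ ⟨l, hl, rfl⟩
  rw [mulVecLin_apply, hpl] at this
  exact (mul_nonneg hsum.le (h l hl)).not_gt this

section

variable {X : Type*} [NormedAddCommGroup X] [NormedSpace ℝ X] {K : Set X}
  {A : X → StrongDual ℝ X}

theorem exists_mem_forall_apply_sub_nonneg_of_finite (hne : K.Nonempty) (hconv : Convex ℝ K)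
    (hmono : ∀ x ∈ K, ∀ y ∈ K, 0 ≤ (A x - A y) (x - y))
    {ι : Type*} [Fintype ι] (y : ι → X) (hy : ∀ i, y i ∈ K) :
    ∃ x ∈ K, ∀ i, 0 ≤ A (y i) (y i - x) := by
  cases isEmpty_or_nonempty ι
  · obtain ⟨x, hx⟩ := hne
    exact ⟨x, hx, isEmptyElim⟩
  set M : Matrix ι ι ℝ := .of fun i j => A (y i) (y i - y j)
  have hsymm : ∀ i j, 0 ≤ (M + Mᵀ) i j := fun i j => by
    have := hmono _ (hy i) _ (hy j)
    simp only [_root_.sub_apply, map_sub] at this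
    simp only [M, Matrix.add_apply, transpose_apply, of_apply, map_sub]
    linarith
  -- The quadratic form only sees the symmetric part `M + Mᵀ`, whose entries are nonnegative.
  have hquad : ∀ l ∈ stdSimplex ℝ ι, 0 ≤ l ⬝ᵥ M *ᵥ l := by
    intro l hl
    have hT : l ⬝ᵥ Mᵀ *ᵥ l = l ⬝ᵥ M *ᵥ l := by
      rw [dotProduct_mulVec, vecMul_transpose, dotProduct_comm]
    have : 0 ≤ l ⬝ᵥ (M + Mᵀ) *ᵥ l := dotProduct_nonneg_of_nonneg hl.1 fun i =>
      dotProduct_nonneg_of_nonneg (hsymm i) hl.1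
    rw [add_mulVec, dotProduct_add, hT] at this
    linarith
  obtain ⟨l, hl, hMl⟩ := exists_mem_stdSimplex_mulVec_nonneg M hquad
  refine ⟨∑ j, l j • y j, hconv.sum_mem (fun j _ => hl.1 j) hl.2 fun j _ => hy j, fun i => ?_⟩
  have : y i - ∑ j, l j • y j = ∑ j, l j • (y i - y j) := by
    simp only [smul_sub, Finset.sum_sub_distrib, ← Finset.sum_smul, hl.2, one_smul]
  simpa [this, M, mulVec, dotProduct, mul_comm] using hMl i

theorem exists_mem_forall_apply_sub_nonneg (hne : K.Nonempty) (hK : WeaklyCompact K)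
    (hconv : Convex ℝ K) (hmono : ∀ x ∈ K, ∀ y ∈ K, 0 ≤ (A x - A y) (x - y)) :
    ∃ x ∈ K, ∀ y ∈ K, 0 ≤ A y (y - x) := by
  let t : K → Set (WeakSpace ℝ X) := fun y => {w | A y ((toWeakSpace ℝ X).symm w) ≤ A y y}
  have htc : ∀ y, IsClosed (t y) := fun y =>
    isClosed_le (WeakBilin.eval_continuous (topDualPairing ℝ X).flip (A y)) continuous_const
  have hfin : ∀ u : Finset K, (toWeakSpaceCLM ℝ X '' K ∩ ⋂ y ∈ u, t y).Nonempty := by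
    intro u
    obtain ⟨x, hx, hxu⟩ := exists_mem_forall_apply_sub_nonneg_of_finite hne hconv hmono
      (fun y : u => ((y : K) : X)) fun y => y.1.2
    refine ⟨toWeakSpace ℝ X x, ⟨x, hx, rfl⟩, Set.mem_iInter₂.2 fun y hy => ?_⟩
    simpa [t, map_sub] using hxu ⟨y, hy⟩
  obtain ⟨_, ⟨x, hx, rfl⟩, hxt⟩ := hK.inter_iInter_nonempty t htc hfin
  refine ⟨x, hx, fun y hy => ?_⟩
  simpa [t, map_sub] using Set.mem_iInter.1 hxt ⟨y, hy⟩

theorem apply_add_smul_sub_nonneg_of_minty (hconv : Convex ℝ K) {x y : X} (hx : x ∈ K)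
    (hy : y ∈ K) (hminty : ∀ z ∈ K, 0 ≤ A z (z - x)) {t : ℝ} (ht₀ : 0 < t) (ht₁ : t ≤ 1) :
    0 ≤ A (x + t • (y - x)) (y - x) := by
  have := hminty _ (hconv.add_smul_sub_mem hx hy ⟨ht₀.le, ht₁⟩)
  rwa [add_sub_cancel_left, map_smul, smul_eq_mul, mul_nonneg_iff_of_pos_left ht₀] at this

end

theorem stmt18_general {X : Type*} [NormedAddCommGroup X] [NormedSpace ℝ X]
    (K : Set X) (hne : K.Nonempty) (hK : WeaklyCompact K) (hconv : Convex ℝ K)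
    (A : X → StrongDual ℝ X)
    (hmono : ∀ x ∈ K, ∀ y ∈ K, 0 ≤ (A x - A y) (x - y))
    (hcont : ∀ M : Submodule ℝ X, FiniteDimensional ℝ M →
      ∀ (u : ℕ → X) (x : X), (∀ n, u n ∈ K ∩ (M : Set X)) → x ∈ K ∩ (M : Set X) →
        Filter.Tendsto u Filter.atTop (nhds x) →
        ∀ z : X, Filter.Tendsto (fun n => A (u n) z) Filter.atTop (nhds (A x z))) :
    ∃ x ∈ K, ∀ y ∈ K, 0 ≤ A x (y - x) := by
  obtain ⟨x, hxK, hminty⟩ := exists_mem_forall_apply_sub_nonneg hne hK hconv hmono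
  refine ⟨x, hxK, fun y hyK => ?_⟩
  let t : ℕ → ℝ := fun n => 1 / (n + 1)
  have ht₀ : ∀ n, 0 < t n := fun n => Nat.one_div_pos_of_nat
  have ht₁ : ∀ n, t n ≤ 1 := fun n => div_le_one_of_le₀ (by simp) (by positivity)
  let M := Submodule.span ℝ {x, y}
  have hxM : x ∈ M := Submodule.subset_span (by simp)
  have hyM : y ∈ M := Submodule.subset_span (by simp)
  have hu : ∀ n, x + t n • (y - x) ∈ K ∩ (M : Set X) := fun n =>
    ⟨hconv.add_smul_sub_mem hxK hyK ⟨(ht₀ n).le, ht₁ n⟩,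
      M.add_mem hxM (M.smul_mem _ (M.sub_mem hyM hxM))⟩
  have hlim : Tendsto (fun n => x + t n • (y - x)) atTop (𝓝 x) := by
    simpa [t] using (tendsto_const_nhds (x := x)).add
      ((tendsto_one_div_add_atTop_nhds_zero_nat (𝕜 := ℝ)).smul_const (y - x))
  refine ge_of_tendsto' (hcont M (FiniteDimensional.span_of_finite ℝ (Set.toFinite _)) _ x hu
    ⟨hxK, hxM⟩ hlim (y - x)) fun n => ?_
  exact apply_add_smul_sub_nonneg_of_minty hconv hxK hyK hminty (ht₀ n) (ht₁ n)

theorem stmt18 {X : Type*} [NormedAddCommGroup X] [NormedSpace ℝ X] [CompleteSpace X]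
    (hrefl : Function.Surjective (NormedSpace.inclusionInDoubleDual ℝ X))
    (K : Set X) (hne : K.Nonempty) (hK : WeaklyCompact K) (hconv : Convex ℝ K)
    (A : X → StrongDual ℝ X)
    (hmono : ∀ x ∈ K, ∀ y ∈ K, 0 ≤ (A x - A y) (x - y))
    (hcont : ∀ M : Submodule ℝ X, FiniteDimensional ℝ M →
      ∀ (u : ℕ → X) (x : X), (∀ n, u n ∈ K ∩ (M : Set X)) → x ∈ K ∩ (M : Set X) →
        Filter.Tendsto u Filter.atTop (nhds x) →
        ∀ z : X, Filter.Tendsto (fun n => A (u n) z) Filter.atTop (nhds (A x z))) :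
    ∃ x ∈ K, ∀ y ∈ K, 0 ≤ A x (y - x) :=
  stmt18_general K hne hK hconv A hmono hcont
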